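/- For each 1 ≤ m ≤ n, the vector v_m ∈ ℝ^{n+2} with components v_m(0) = 1, v_m(j) = λ_m·Ũ_{j−1}^{(m)}/√q − Ũ_{j−2}^{(m)}/√p for 1 ≤ j ≤ n, and v_m(n+1) = √q·(λ_m·Ũ_n^{(m)}/√q − Ũ_{n−1}^{(m)}/√p) satisfies J v_m = λ_m v_m; i.e., v_m is an eigenvector of J for the eigenvalue λ_m = 2√(pq)·cos(mπ/(n+1)). -/

import Mathlib

open Filter Finset

/-- The `(n+2) × (n+2)` Jacobi matrix of the reflected random walk on the path:
zero diagonal, `J(0,1) = √q`, `J(i,i+1) = √(pq)` for `1 ≤ i ≤ n-1`, `J(n,n+1) = √p`,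
and symmetric. -/
noncomputable def jacobiM (p q : ℝ) (n : ℕ) : Matrix (Fin (n + 2)) (Fin (n + 2)) ℝ :=
  fun k l =>
    if k.1 + 1 = l.1 then
      (if k.1 = 0 then Real.sqrt q else if k.1 = n then Real.sqrt p else Real.sqrt (p * q))
    else if l.1 + 1 = k.1 then
      (if l.1 = 0 then Real.sqrt q else if l.1 = n then Real.sqrt p else Real.sqrt (p * q))
    else 0

/-- `θ_m = mπ/(n+1)`. -/
noncomputable def thetaAngle (n m : ℕ) : ℝ := m * Real.pi / (n + 1)

/-- `λ_m = 2√(pq)·cos θ_m`. -/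
noncomputable def lamEig (p q : ℝ) (n m : ℕ) : ℝ :=
  2 * Real.sqrt (p * q) * Real.cos (thetaAngle n m)

/-- `Ũ_k^{(m)} = sin((k+1)θ_m)/sin θ_m` for integers `k ≥ -1`
(so `Ũ_{-1}^{(m)} = 0` and `Ũ_0^{(m)} = 1`). -/
noncomputable def Ubar (n m : ℕ) (k : ℤ) : ℝ :=
  Real.sin ((k + 1) * thetaAngle n m) / Real.sin (thetaAngle n m)

/-- The vector `v_m` with `v_m(0) = 1`,
`v_m(j) = λ_m·Ũ_{j-1}^{(m)}/√q - Ũ_{j-2}^{(m)}/√p` for `1 ≤ j ≤ n`, and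
`v_m(n+1) = √q·(λ_m·Ũ_n^{(m)}/√q - Ũ_{n-1}^{(m)}/√p)`. -/
noncomputable def vVec (p q : ℝ) (n m : ℕ) : Fin (n + 2) → ℝ :=
  fun j =>
    if j.1 = 0 then 1
    else if j.1 = n + 1 then
      Real.sqrt q *
        (lamEig p q n m * Ubar n m (n : ℤ) / Real.sqrt q - Ubar n m ((n : ℤ) - 1) / Real.sqrt p)
    else
      lamEig p q n m * Ubar n m ((j.1 : ℤ) - 1) / Real.sqrt q
        - Ubar n m ((j.1 : ℤ) - 2) / Real.sqrt p

/-!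
Write `v_m = (√p g₀, g₁, …, gₙ, √q gₙ₊₁)` with `g_j = λ Ũ_{j-1}/√q - Ũ_{j-2}/√p`. On the
interior rows, `J v = λ v` is the three-term recurrence `√(pq) (g_{j-1} + g_{j+1}) = λ g_j`, which
follows from the Chebyshev recurrence `Ũ_{k+1} + Ũ_{k-1} = 2 cos θ · Ũ_k` since `λ = 2√(pq) cos θ`.
The first row reduces to `Ũ_{-2} = -1`, `Ũ_{-1} = 0`, `Ũ_0 = 1`, and the last row to
`Ũ_n = 0` (that is, `sin((n+1)θ_m) = 0`) together with `p + q = 1`.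
-/

open Real Matrix

lemma jacobiM_apply_of_not_adj {p q : ℝ} {n : ℕ} {k l : Fin (n + 2)}
    (h₁ : k.1 + 1 ≠ l.1) (h₂ : l.1 + 1 ≠ k.1) : jacobiM p q n k l = 0 := by
  simp [jacobiM, h₁, h₂]

noncomputable def scaleEnds (p q : ℝ) (n : ℕ) (g : ℕ → ℝ) : Fin (n + 2) → ℝ := fun j =>
  if j.1 = 0 then √p * g 0 else if j.1 = n + 1 then √q * g (n + 1) else g j

theorem jacobiM_mulVec_scaleEnds {p q : ℝ} {n : ℕ} (hn : 1 ≤ n) (hp : 0 ≤ p) {g : ℕ → ℝ}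
    {μ : ℝ} (hrec : ∀ k < n, √(p * q) * (g k + g (k + 2)) = μ * g (k + 1))
    (hleft : √q * g 1 = μ * (√p * g 0)) (hright : √p * g n = μ * (√q * g (n + 1))) :
    jacobiM p q n *ᵥ scaleEnds p q n g = μ • scaleEnds p q n g := by
  have hpq : √(p * q) = √p * √q := Real.sqrt_mul hp q
  ext ⟨k, hk⟩
  simp only [mulVec, dotProduct, Pi.smul_apply, smul_eq_mul]
  rcases k with _ | j
  · rw [Fintype.sum_eq_single ⟨1, by omega⟩ fun l hl => by
      rw [jacobiM_apply_of_not_adj (by simpa [Fin.ext_iff, eq_comm] using hl) (by simp), zero_mul]]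
    simpa [jacobiM, scaleEnds, show n ≠ 0 by omega, show 1 ≠ n + 1 by omega] using hleft
  rcases Nat.lt_or_ge j n with hj | hj
  · rw [Fintype.sum_eq_add ⟨j, by omega⟩ ⟨j + 2, by omega⟩ (by simp [Fin.ext_iff]) fun l hl => by
      simp only [ne_eq, Fin.ext_iff] at hl
      rw [jacobiM_apply_of_not_adj (by simp only; omega) (by simp only; omega), zero_mul]]
    have hlow : jacobiM p q n ⟨j + 1, hk⟩ ⟨j, by omega⟩ * scaleEnds p q n g ⟨j, by omega⟩
        = √(p * q) * g j := by
      rcases j with _ | i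
      · simp only [jacobiM, zero_add, Nat.reduceAdd, OfNat.ofNat_ne_zero, ↓reduceIte, scaleEnds, hpq]
        ring
      · simp [jacobiM, scaleEnds, show i ≠ n by omega, show i + 1 ≠ n by omega,
          show i + 1 + 1 ≠ i by omega]
    have hhigh : jacobiM p q n ⟨j + 1, hk⟩ ⟨j + 2, by omega⟩ * scaleEnds p q n g ⟨j + 2, by omega⟩
        = √(p * q) * g (j + 2) := by
      by_cases h : j + 1 = n
      · subst h
        simp only [jacobiM, ↓reduceIte, Nat.add_eq_zero_iff, one_ne_zero, and_false, scaleEnds, OfNat.ofNat_ne_zero, hpq]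
        ring
      · simp [jacobiM, scaleEnds, h, show j + 2 ≠ n + 1 by omega]
    rw [hlow, hhigh, ← mul_add, hrec j hj]
    simp [scaleEnds, show j ≠ n by omega]
  · have : n = j := by omega
    subst this
    rw [Fintype.sum_eq_single ⟨n, by omega⟩ fun l hl => by
      rw [jacobiM_apply_of_not_adj (by simp; omega) (by simpa [Fin.ext_iff] using hl), zero_mul]]
    simpa [jacobiM, scaleEnds, show n ≠ 0 by omega, show n + 1 + 1 ≠ n by omega] using hright

section Chebyshev

variable (n m : ℕ)

lemma Ubar_add_one_add_Ubar_sub_one (j : ℤ) :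
    Ubar n m (j + 1) + Ubar n m (j - 1) = 2 * cos (thetaAngle n m) * Ubar n m j := by
  simp only [Ubar, Int.cast_add, Int.cast_sub, Int.cast_one]
  rw [show ((j : ℝ) + 1 + 1) * thetaAngle n m = (j + 1) * thetaAngle n m + thetaAngle n m by ring,
    show ((j : ℝ) - 1 + 1) * thetaAngle n m = (j + 1) * thetaAngle n m - thetaAngle n m by ring,
    sin_add, sin_sub]
  ring

lemma Ubar_neg_one : Ubar n m (-1) = 0 := by
  simp [Ubar]

variable {n m}

lemma Ubar_zero (hs : sin (thetaAngle n m) ≠ 0) : Ubar n m 0 = 1 := by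
  simp [Ubar, hs]

lemma Ubar_neg_two (hs : sin (thetaAngle n m) ≠ 0) : Ubar n m (-2) = -1 := by
  norm_num [Ubar, neg_div, hs]

lemma Ubar_natCast_self : Ubar n m n = 0 := by
  have : ((n : ℤ) + 1 : ℝ) * thetaAngle n m = m * π := by
    simp only [thetaAngle, Int.cast_natCast]
    field_simp
  rw [Ubar, this, sin_nat_mul_pi, zero_div]

lemma sin_thetaAngle_ne_zero (hm1 : 1 ≤ m) (hmn : m ≤ n) : sin (thetaAngle n m) ≠ 0 := by
  refine (sin_pos_of_pos_of_lt_pi (by unfold thetaAngle; positivity) ?_).ne'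
  rw [thetaAngle, div_lt_iff₀ (by positivity)]
  have : (m : ℝ) < n + 1 := by exact_mod_cast Nat.lt_succ_of_le hmn
  nlinarith [pi_pos]

end Chebyshev

noncomputable def eigenProfile (p q : ℝ) (n m : ℕ) (j : ℕ) : ℝ :=
  lamEig p q n m * Ubar n m (j - 1) / √q - Ubar n m (j - 2) / √p

section eigenProfile

variable {p q : ℝ} {n m : ℕ}

lemma eigenProfile_threeTerm (k : ℕ) :
    √(p * q) * (eigenProfile p q n m k + eigenProfile p q n m (k + 2))
      = lamEig p q n m * eigenProfile p q n m (k + 1) := by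
  have h₁ := Ubar_add_one_add_Ubar_sub_one n m (k - 1)
  have h₂ := Ubar_add_one_add_Ubar_sub_one n m k
  rw [sub_add_cancel, sub_sub, one_add_one_eq_two] at h₁
  simp only [eigenProfile, lamEig, Nat.cast_add, Nat.cast_ofNat, Nat.cast_one, add_sub_cancel_right,
    show (k : ℤ) + 2 - 1 = k + 1 by ring, show (k : ℤ) + 1 - 2 = k - 1 by ring]
  linear_combination (√(p * q) * (2 * √(p * q) * cos (thetaAngle n m)) / √q) * h₂
    - (√(p * q) / √p) * h₁

lemma eigenProfile_zero (hs : sin (thetaAngle n m) ≠ 0) : eigenProfile p q n m 0 = (√p)⁻¹ := by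
  simp [eigenProfile, Ubar_neg_one, Ubar_neg_two hs, neg_div]

lemma eigenProfile_one (hs : sin (thetaAngle n m) ≠ 0) :
    eigenProfile p q n m 1 = lamEig p q n m / √q := by
  simp [eigenProfile, Ubar_zero hs, Ubar_neg_one]

lemma eigenProfile_leftBoundary (hp : 0 < p) (hq : 0 < q) (hs : sin (thetaAngle n m) ≠ 0) :
    √q * eigenProfile p q n m 1 = lamEig p q n m * (√p * eigenProfile p q n m 0) := by
  have : √p ≠ 0 := (sqrt_pos.2 hp).ne'
  have : √q ≠ 0 := (sqrt_pos.2 hq).ne'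
  rw [eigenProfile_zero hs, eigenProfile_one hs]
  field_simp

lemma eigenProfile_rightBoundary (hp : 0 < p) (hq : 0 < q) (hpq : p + q = 1) :
    √p * eigenProfile p q n m n = lamEig p q n m * (√q * eigenProfile p q n m (n + 1)) := by
  have h := Ubar_add_one_add_Ubar_sub_one n m (n - 1)
  rw [sub_add_cancel, Ubar_natCast_self, zero_add, sub_sub, one_add_one_eq_two] at h
  have hp' : √p ≠ 0 := (sqrt_pos.2 hp).ne'
  have hq' : √q ≠ 0 := (sqrt_pos.2 hq).ne'
  simp only [eigenProfile, lamEig, Nat.cast_add, Nat.cast_one, add_sub_cancel_right,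
    show (n : ℤ) + 1 - 2 = n - 1 by ring, Ubar_natCast_self, h, sqrt_mul hp.le]
  field_simp
  linear_combination
    cos (thetaAngle n m) * Ubar n m (n - 1) * (hpq + sq_sqrt hp.le + sq_sqrt hq.le)

lemma vVec_eq_scaleEnds (hp : 0 < p) (hs : sin (thetaAngle n m) ≠ 0) :
    vVec p q n m = scaleEnds p q n (eigenProfile p q n m) := by
  ext j
  simp only [vVec, scaleEnds]
  split_ifs
  · rw [eigenProfile_zero hs, mul_inv_cancel₀ (sqrt_pos.2 hp).ne']
  · simp only [eigenProfile]
    push_cast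
    ring_nf
  · rfl

end eigenProfile

theorem jacobiM_mulVec_vVec_general (n : ℕ)
    (p q : ℝ) (hp0 : 0 < p) (hq0 : 0 < q) (hpq : p + q = 1)
    (m : ℕ) (hm1 : 1 ≤ m) (hmn : m ≤ n) :
    (jacobiM p q n).mulVec (vVec p q n m) = lamEig p q n m • vVec p q n m := by
  have hs := sin_thetaAngle_ne_zero hm1 hmn
  rw [vVec_eq_scaleEnds hp0 hs]
  exact jacobiM_mulVec_scaleEnds (by omega) hp0.le (fun k _ => eigenProfile_threeTerm k)
    (eigenProfile_leftBoundary hp0 hq0 hs) (eigenProfile_rightBoundary hp0 hq0 hpq)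

/-- **Lemma.** For each `1 ≤ m ≤ n`, the vector `v_m` is an eigenvector of the Jacobi
matrix `J` for the eigenvalue `λ_m = 2√(pq)·cos(mπ/(n+1))`: `J v_m = λ_m v_m`. -/
theorem jacobiM_mulVec_vVec (n : ℕ) (hn : 1 ≤ n)
    (p q : ℝ) (hp0 : 0 < p) (hp1 : p < 1) (hq0 : 0 < q) (hq1 : q < 1) (hpq : p + q = 1)
    (m : ℕ) (hm1 : 1 ≤ m) (hmn : m ≤ n) :
    (jacobiM p q n).mulVec (vVec p q n m) = lamEig p q n m • vVec p q n m :=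
  jacobiM_mulVec_vVec_general n p q hp0 hq0 hpq m hm1 hmn
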